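/- Suppose z : [0,∞) → ℝⁿ is twice differentiable, g : ℝⁿ → ℝ is twice continuously differentiable, l : ℝⁿ → ℝ is convex and differentiable, α, β : [0,∞) → ℝ are differentiable with β'(t) ≤ e^{α(t)} and β' ≥ 0, and z satisfies the Bregman dynamics d/dt[∇g(z(t) + e^{−α(t)} ż(t))] = −e^{α(t)+β(t)} ∇l(z(t)). Then the function V(t) = d_g(z*, z(t) + e^{−α(t)} ż(t)) + e^{β(t)}(l(z(t)) − l(z*)) is nonincreasing in t, where z* is a minimizer of l and d_g is the Bregman divergence of g. -/

import Mathlib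

/-!
Write `w = z + e^{-α} ż`. The ODE makes `d/dt d_g(z*, w) = -⟪d/dt ∇g(w), z* - w⟫
= e^{α+β} ⟪∇l(z), z* - z⟫ - e^β ⟪∇l(z), ż⟫`, and the last term cancels against the derivative of
`l ∘ z` in `d/dt [e^β (l(z) - l(z*))]`. By convexity `⟪∇l(z), z* - z⟫ ≤ l(z*) - l(z)`, so
`V' ≤ e^β (β' - e^α) (l(z) - l(z*)) ≤ 0`.
-/

open RealInnerProductSpace

noncomputable def bregman {n : ℕ} (g : EuclideanSpace ℝ (Fin n) → ℝ)
    (y x : EuclideanSpace ℝ (Fin n)) : ℝ :=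
  g y - g x - ⟪gradient g x, y - x⟫

theorem ConvexOn.apply_sub_le_of_hasFDerivAt {E : Type*} [NormedAddCommGroup E] [NormedSpace ℝ E]
    {s : Set E} {f : E → ℝ} {f' : E →L[ℝ] ℝ} {x y : E} (hf : ConvexOn ℝ s f)
    (hx : x ∈ s) (hy : y ∈ s) (hf' : HasFDerivAt f f' x) :
    f' (y - x) ≤ f y - f x := by
  have hline : HasDerivAt (AffineMap.lineMap (k := ℝ) x y) (y - x) 0 := by
    simpa using AffineMap.hasDerivAt_lineMap (a := x) (b := y) (x := (0 : ℝ))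
  have hφ : HasDerivAt (f ∘ AffineMap.lineMap (k := ℝ) x y) (f' (y - x)) 0 :=
    hf'.comp_hasDerivAt_of_eq 0 hline (by simp)
  simpa [slope] using (hf.comp_affineMap (AffineMap.lineMap x y)).le_slope_of_hasDerivAt
    (by simpa using hx) (by simpa using hy) one_pos hφ

theorem ConvexOn.inner_gradient_sub_le {E : Type*} [NormedAddCommGroup E] [InnerProductSpace ℝ E]
    [CompleteSpace E] {s : Set E} {f : E → ℝ} {x y : E} (hf : ConvexOn ℝ s f)
    (hx : x ∈ s) (hy : y ∈ s) (hfx : DifferentiableAt ℝ f x) :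
    ⟪gradient f x, y - x⟫ ≤ f y - f x := by
  rw [inner_gradient_left]
  exact hf.apply_sub_le_of_hasFDerivAt hx hy hfx.hasFDerivAt

theorem HasGradientAt.comp_hasDerivAt {E : Type*} [NormedAddCommGroup E] [InnerProductSpace ℝ E]
    [CompleteSpace E] {f : E → ℝ} {f' : E} {w : ℝ → E} {w' : E} {t : ℝ}
    (hf : HasGradientAt f f' (w t)) (hw : HasDerivAt w w' t) :
    HasDerivAt (fun s => f (w s)) ⟪f', w'⟫ t := by
  have h := (hasGradientAt_iff_hasFDerivAt.mp hf).comp_hasDerivAt t hw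
  rwa [InnerProductSpace.toDual_apply_apply] at h

theorem ContDiff.differentiable_gradient {E : Type*} [NormedAddCommGroup E] [InnerProductSpace ℝ E]
    [CompleteSpace E] {f : E → ℝ} {n : WithTop ℕ∞} (hf : ContDiff ℝ n f) (hn : 2 ≤ n) :
    Differentiable ℝ (gradient f) :=
  (InnerProductSpace.toDual ℝ E).symm.differentiable.comp
    ((hf.fderiv_right (m := 1) hn).differentiable one_ne_zero)

theorem hasDerivAt_bregman {n : ℕ} {g : EuclideanSpace ℝ (Fin n) → ℝ}
    {y : EuclideanSpace ℝ (Fin n)} {w : ℝ → EuclideanSpace ℝ (Fin n)}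
    {w' G' : EuclideanSpace ℝ (Fin n)} {t : ℝ}
    (hg : DifferentiableAt ℝ g (w t)) (hw : HasDerivAt w w' t)
    (hG : HasDerivAt (fun s => gradient g (w s)) G' t) :
    HasDerivAt (fun s => bregman g y (w s)) (-⟪G', y - w t⟫) t := by
  have hgw : HasDerivAt (fun s => g (w s)) ⟪gradient g (w t), w'⟫ t :=
    hg.hasGradientAt.comp_hasDerivAt hw
  have hinner : HasDerivAt (fun s => ⟪gradient g (w s), y - w s⟫)
      (⟪gradient g (w t), -w'⟫ + ⟪G', y - w t⟫) t :=
    hG.inner ℝ (hw.const_sub y)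
  exact (((hasDerivAt_const t (g y)).sub hgw).sub hinner).congr_deriv
    (by rw [inner_neg_right]; ring)

theorem hasDerivAt_bregman_lyapunov {n : ℕ} {g l : EuclideanSpace ℝ (Fin n) → ℝ}
    {zstar : EuclideanSpace ℝ (Fin n)} {α β : ℝ → ℝ} {β' : ℝ}
    {z v : ℝ → EuclideanSpace ℝ (Fin n)} {w' : EuclideanSpace ℝ (Fin n)} {t : ℝ}
    (hg : DifferentiableAt ℝ g (z t + Real.exp (-α t) • v t)) (hl : DifferentiableAt ℝ l (z t))
    (hβ : HasDerivAt β β' t) (hz : HasDerivAt z (v t) t)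
    (hw : HasDerivAt (fun s => z s + Real.exp (-α s) • v s) w' t)
    (hode : HasDerivAt (fun s => gradient g (z s + Real.exp (-α s) • v s))
      (-Real.exp (α t + β t) • gradient l (z t)) t) :
    HasDerivAt (fun s => bregman g zstar (z s + Real.exp (-α s) • v s)
        + Real.exp (β s) * (l (z s) - l zstar))
      (Real.exp (α t + β t) * ⟪gradient l (z t), zstar - z t⟫
        + β' * Real.exp (β t) * (l (z t) - l zstar)) t := by
  have hlz : HasDerivAt (fun s => l (z s)) ⟪gradient l (z t), v t⟫ t :=
    hl.hasGradientAt.comp_hasDerivAt hz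
  refine ((hasDerivAt_bregman hg hw hode).add
    (hβ.exp.mul (hlz.sub_const (l zstar)))).congr_deriv ?_
  have hexp : Real.exp (α t + β t) * Real.exp (-α t) = Real.exp (β t) := by
    rw [← Real.exp_add]; ring_nf
  simp only [real_inner_smul_left, inner_sub_right, inner_add_right,
    real_inner_smul_right]
  linear_combination (-⟪gradient l (z t), v t⟫) * hexp

theorem bregman_lyapunov_antitone_general {n : ℕ}
    (g l : EuclideanSpace ℝ (Fin n) → ℝ)
    (hg : ContDiff ℝ 2 g)
    (hl : ConvexOn ℝ Set.univ l) (hld : Differentiable ℝ l)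
    (zstar : EuclideanSpace ℝ (Fin n)) (hmin : ∀ z, l zstar ≤ l z)
    (α β : ℝ → ℝ) (hα : Differentiable ℝ α) (hβ : Differentiable ℝ β)
    (hβ' : ∀ t, deriv β t ≤ Real.exp (α t))
    (z : ℝ → EuclideanSpace ℝ (Fin n))
    (hz : Differentiable ℝ z) (hz2 : Differentiable ℝ (deriv z))
    (hode : ∀ t, deriv (fun s => gradient g (z s + Real.exp (-α s) • deriv z s)) t
      = -(Real.exp (α t + β t)) • gradient l (z t)) :
    AntitoneOn (fun t =>
      bregman g zstar (z t + Real.exp (-α t) • deriv z t)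
        + Real.exp (β t) * (l (z t) - l zstar)) (Set.Ici (0 : ℝ)) := by
  have hw : Differentiable ℝ fun s => z s + Real.exp (-α s) • deriv z s :=
    hz.add (hα.neg.exp.smul hz2)
  have hG : Differentiable ℝ fun s => gradient g (z s + Real.exp (-α s) • deriv z s) :=
    (hg.differentiable_gradient le_rfl).comp hw
  have hV := fun t => hasDerivAt_bregman_lyapunov (zstar := zstar)
    (hg.differentiable two_ne_zero _) (hld (z t)) (hβ t).hasDerivAt (hz t).hasDerivAt
    (hw t).hasDerivAt (hode t ▸ (hG t).hasDerivAt)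
  refine (antitone_of_hasDerivAt_nonpos hV fun t => ?_).antitoneOn _
  have hgap : 0 ≤ l (z t) - l zstar := sub_nonneg.mpr (hmin (z t))
  calc Real.exp (α t + β t) * ⟪gradient l (z t), zstar - z t⟫
        + deriv β t * Real.exp (β t) * (l (z t) - l zstar)
      ≤ Real.exp (α t + β t) * (l zstar - l (z t))
        + Real.exp (α t) * Real.exp (β t) * (l (z t) - l zstar) := by
        gcongr
        · exact hl.inner_gradient_sub_le (Set.mem_univ _) (Set.mem_univ _) (hld _)
        · exact hβ' t
    _ = 0 := by rw [Real.exp_add]; ring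

theorem bregman_lyapunov_antitone {n : ℕ}
    (g l : EuclideanSpace ℝ (Fin n) → ℝ)
    (hg : ContDiff ℝ 2 g) (hsc : StrictConvexOn ℝ Set.univ g)
    (hl : ConvexOn ℝ Set.univ l) (hld : Differentiable ℝ l)
    (zstar : EuclideanSpace ℝ (Fin n)) (hmin : ∀ z, l zstar ≤ l z)
    (α β : ℝ → ℝ) (hα : Differentiable ℝ α) (hβ : Differentiable ℝ β)
    (hβ' : ∀ t, deriv β t ≤ Real.exp (α t)) (hβ'' : ∀ t, 0 ≤ deriv β t)
    (z : ℝ → EuclideanSpace ℝ (Fin n))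
    (hz : Differentiable ℝ z) (hz2 : Differentiable ℝ (deriv z))
    (hode : ∀ t, deriv (fun s => gradient g (z s + Real.exp (-α s) • deriv z s)) t
      = -(Real.exp (α t + β t)) • gradient l (z t)) :
    AntitoneOn (fun t =>
      bregman g zstar (z t + Real.exp (-α t) • deriv z t)
        + Real.exp (β t) * (l (z t) - l zstar)) (Set.Ici (0 : ℝ)) :=
  bregman_lyapunov_antitone_general g l hg hl hld zstar hmin α β hα hβ hβ' z hz hz2 hode
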